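/- (OR-gadget) Suppose s, s', t₁, t₁', t₂, t₂', u₁₂, u₁'₂, u₁₂', u₁'₂' are states in a pLTS, and the only transitions outgoing from s, s', u₁₂, u₁'₂, u₁₂', u₁'₂' are: s –a→ u₁₂ | u₁'₂', s' –a→ u₁₂' | u₁'₂, u₁₂ –a→ t₁ | t₂, u₁'₂' –a→ t₁' | t₂', u₁₂' –a→ t₁ | t₂', u₁'₂ –a→ t₁' | t₂. Then s ∼ s' if and only if (t₁ ∼ t₁' or t₂ ∼ t₂'). -/

import Mathlib

open scoped ENNReal

noncomputable section

/-- A probabilistic labelled transition system (pLTS): states `S`, alphabet `A`,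
and a transition relation into probability distributions (`PMF`s) on `S`. -/
structure PLTS (S : Type) (A : Type) where
  Tr : S → A → PMF S → Prop

namespace PLTS

variable {S A : Type}

/-- The mass that a distribution assigns to a set of states. -/
def mass (d : PMF S) (E : Set S) : ℝ≥0∞ := ∑' s : E, d s

/-- Two distributions are `r`-equivalent if they assign equal mass to every
`r`-equivalence class (for an equivalence `r`, the classes are the sets `{t | r s t}`). -/
def REquiv (r : S → S → Prop) (d d' : PMF S) : Prop :=
  ∀ s : S, mass d {t | r s t} = mass d' {t | r s t}

/-- An equivalence relation is a bisimulation if related states can match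
each other's transitions with `r`-equivalent target distributions. -/
def IsBisimulation (L : PLTS S A) (r : S → S → Prop) : Prop :=
  Equivalence r ∧
    ∀ s t, r s t → ∀ a d, L.Tr s a d → ∃ d', L.Tr t a d' ∧ REquiv r d d'

/-- Bisimilarity: the union of all bisimulation relations. -/
def Bisim (L : PLTS S A) (s t : S) : Prop :=
  ∃ r, L.IsBisimulation r ∧ r s t

/-- The bisimulation approximants `∼ₙ`. -/
def approx (L : PLTS S A) : ℕ → S → S → Prop
  | 0 => fun _ _ => True
  | n + 1 => fun s t =>
      (∀ a d, L.Tr s a d → ∃ d', L.Tr t a d' ∧ REquiv (L.approx n) d d') ∧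
      (∀ a d', L.Tr t a d' → ∃ d, L.Tr s a d ∧ REquiv (L.approx n) d d')

/-- A pLTS is finitely branching if every state has finitely many transitions. -/
def FinBranching (L : PLTS S A) : Prop :=
  ∀ s, {p : A × PMF S | L.Tr s p.1 p.2}.Finite

/-- One-step successor relation: `s → s'` iff some transition of `s` gives `s'`
positive probability. -/
def Step (L : PLTS S A) (s s' : S) : Prop :=
  ∃ a d, L.Tr s a d ∧ d s' ≠ 0

end PLTS

namespace PLTS

variable {S A : Type}

/-- `d` is the distribution `x | y`: two distinct points each of probability 1/2. -/
def TwoHalf (d : PMF S) (x y : S) : Prop :=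
  x ≠ y ∧ d x = 1 / 2 ∧ d y = 1 / 2

/-- The only transition outgoing from `s` is `s –a→ d`. -/
def OnlyTr (L : PLTS S A) (s : S) (a : A) (d : PMF S) : Prop :=
  L.Tr s a d ∧ ∀ b e, L.Tr s b e → b = a ∧ e = d

end PLTS

/-!
A bisimulation `r` with `r s s'` must send the class of `u₁₂`, which has mass `1/2` under the
step of `s`, to a class meeting `{u₁₂', u₁'₂}`. In either case the successors of the two related
`u`-states share one target (`t₁` or `t₂`), and matching `x | y` with `x | y'` forces `y ∼ y'`.

Conversely, if `t₁ ∼ t₁'` then `s ∼ s'` is witnessed by the equivalence generated by `∼` together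
with the pairs `(s, s')`, `(u₁₂, u₁'₂)`, `(u₁'₂', u₁₂')`; the case `t₂ ∼ t₂'` is the same gadget
with the indices `1` and `2` exchanged. Checking that such a generated equivalence is a
bisimulation needs that equivalence of distributions modulo `r₀` implies equivalence modulo
any coarser `r`, which holds because every `r`-class is a union of `r₀`-classes.
-/

namespace PLTS

variable {S A : Type}

section Distributions

variable {r r₀ : S → S → Prop} {d d' e : PMF S} {x y x' y' : S}

lemma mass_eq_toOuterMeasure (d : PMF S) (E : Set S) : mass d E = d.toOuterMeasure E := by
  rw [mass, PMF.toOuterMeasure_apply, tsum_subtype]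

lemma REquiv.symm (h : REquiv r d d') : REquiv r d' d := fun s => (h s).symm

lemma REquiv.trans (h : REquiv r d d') (h' : REquiv r d' e) : REquiv r d e :=
  fun s => (h s).trans (h' s)

lemma REquiv.map_mk_eq {R : Setoid S} (h : REquiv R.r d d') :
    d.map (Quotient.mk R) = d'.map (Quotient.mk R) := by
  ext q
  induction q using Quotient.inductionOn with
  | h x =>
    have hfiber : Quotient.mk R ⁻¹' {Quotient.mk R x} = {t | R.r x t} := by
      ext t
      simpa [Quotient.eq] using ⟨R.iseqv.symm, R.iseqv.symm⟩
    rw [← PMF.toOuterMeasure_apply_singleton, ← PMF.toOuterMeasure_apply_singleton,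
      PMF.toOuterMeasure_map_apply, PMF.toOuterMeasure_map_apply, hfiber,
      ← mass_eq_toOuterMeasure, ← mass_eq_toOuterMeasure, h x]

lemma REquiv.mono (h₀ : Equivalence r₀) (hr : Equivalence r) (hle : r₀ ≤ r)
    (h : REquiv r₀ d d') : REquiv r d d' := by
  intro s
  let R : Setoid S := ⟨r₀, h₀⟩
  have hclass : {t | r s t} = Quotient.mk R ⁻¹'
      {q | Quotient.lift (r s) (fun _ _ hab => propext
        ⟨fun h => hr.trans h (hle _ _ hab), fun h => hr.trans h (hr.symm (hle _ _ hab))⟩) q} :=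
    rfl
  rw [mass_eq_toOuterMeasure, mass_eq_toOuterMeasure, hclass, ← PMF.toOuterMeasure_map_apply,
    ← PMF.toOuterMeasure_map_apply, REquiv.map_mk_eq (R := R) h]

lemma rel_or_rel_of_requiv (hr : Equivalence r) (h : REquiv r d d') (hx : x ∈ d.support)
    (hd' : d'.support ⊆ {x', y'}) : r x x' ∨ r x y' := by
  have hmass : d'.toOuterMeasure {t | r x t} ≠ 0 := by
    rw [← mass_eq_toOuterMeasure, ← h x, mass_eq_toOuterMeasure, Ne,
      PMF.toOuterMeasure_apply_eq_zero_iff, Set.not_disjoint_iff]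
    exact ⟨x, hx, hr.refl x⟩
  rw [Ne, PMF.toOuterMeasure_apply_eq_zero_iff, Set.not_disjoint_iff] at hmass
  obtain ⟨z, hz, hxz⟩ := hmass
  rcases hd' hz with rfl | rfl
  exacts [Or.inl hxz, Or.inr hxz]

end Distributions

namespace TwoHalf

variable {r : S → S → Prop} {d d' : PMF S} {x y x' y' : S}

lemma symm (h : TwoHalf d x y) : TwoHalf d y x := ⟨h.1.symm, h.2.2, h.2.1⟩

lemma left_mem_support (h : TwoHalf d x y) : x ∈ d.support := by
  simp [PMF.mem_support_iff, h.2.1]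

lemma support_subset (h : TwoHalf d x y) : d.support ⊆ {x, y} := by
  classical
  rw [← PMF.toOuterMeasure_apply_eq_one_iff, ← Finset.coe_pair,
    PMF.toOuterMeasure_apply_finset, Finset.sum_pair h.1, h.2.1, h.2.2, ENNReal.add_halves]

lemma mass_eq (h : TwoHalf d x y) (E : Set S) : mass d E = E.indicator d x + E.indicator d y := by
  classical
  rw [mass_eq_toOuterMeasure, PMF.toOuterMeasure_apply, ← Finset.sum_pair h.1]
  refine tsum_eq_sum fun z hz => Set.indicator_apply_eq_zero.2 fun _ => ?_
  exact (PMF.apply_eq_zero_iff d z).2 fun hs => hz (by simpa using h.support_subset hs)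

lemma requiv (hr : Equivalence r) (hd : TwoHalf d x y) (hd' : TwoHalf d' x' y') (hx : r x x')
    (hy : r y y') : REquiv r d d' := by
  classical
  intro s
  have hclass : ∀ {z z'}, r z z' → (r s z ↔ r s z') :=
    fun hz => ⟨fun h => hr.trans h hz, fun h => hr.trans h (hr.symm hz)⟩
  simp only [hd.mass_eq, hd'.mass_eq, Set.indicator_apply, Set.mem_ofPred_eq, hd.2.1, hd.2.2,
    hd'.2.1, hd'.2.2, hclass hx, hclass hy]

lemma rel_of_requiv (hr : Equivalence r) (hd : TwoHalf d x y) (hd' : TwoHalf d' x y')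
    (h : REquiv r d d') : r y y' := by
  rcases rel_or_rel_of_requiv hr h hd.symm.left_mem_support hd'.support_subset with hyx | hyy'
  · rcases rel_or_rel_of_requiv hr h.symm hd'.symm.left_mem_support hd.support_subset with
      hy'x | hy'y
    · exact hr.trans hyx (hr.symm hy'x)
    · exact hr.symm hy'y
  · exact hyy'

end TwoHalf

section Bisimulation

variable {L : PLTS S A} {r r₀ g : S → S → Prop} {p q : S} {a : A} {d e : PMF S}

def Matches (L : PLTS S A) (r : S → S → Prop) (p q : S) : Prop :=
  ∀ a d, L.Tr p a d → ∃ d', L.Tr q a d' ∧ REquiv r d d'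

lemma Matches.refl (L : PLTS S A) (r : S → S → Prop) (p : S) : Matches L r p p :=
  fun _ d hd => ⟨d, hd, fun _ => rfl⟩

lemma Matches.trans {w : S} (hpq : Matches L r p q) (hqw : Matches L r q w) : Matches L r p w := by
  intro a d hd
  obtain ⟨d', hd', h⟩ := hpq a d hd
  obtain ⟨d'', hd'', h'⟩ := hqw a d' hd'
  exact ⟨d'', hd'', h.trans h'⟩

lemma Matches.mono (h₀ : Equivalence r₀) (hr : Equivalence r) (hle : r₀ ≤ r)
    (h : Matches L r₀ p q) : Matches L r p q := by
  intro a d hd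
  obtain ⟨d', hd', he⟩ := h a d hd
  exact ⟨d', hd', he.mono h₀ hr hle⟩

lemma OnlyTr.matches (hp : L.OnlyTr p a d) (hq : L.OnlyTr q a e) (h : REquiv r d e) :
    Matches L r p q := by
  intro b d' hd'
  obtain ⟨rfl, rfl⟩ := hp.2 b d' hd'
  exact ⟨e, hq.1, h⟩

lemma OnlyTr.requiv_of_rel (hr : L.IsBisimulation r) (hp : L.OnlyTr p a d)
    (hq : L.OnlyTr q a e) (hpq : r p q) : REquiv r d e := by
  obtain ⟨e', he', h⟩ := hr.2 p q hpq a d hp.1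
  obtain ⟨-, rfl⟩ := hq.2 a e' he'
  exact h

lemma IsBisimulation.bisim (hr : L.IsBisimulation r) (hpq : r p q) : L.Bisim p q := ⟨r, hr, hpq⟩

/-- Mutual matching is an equivalence, so it suffices to check it on the generators. -/
lemma isBisimulation_eqvGen
    (h : ∀ p q, g p q → Matches L (Relation.EqvGen g) p q ∧ Matches L (Relation.EqvGen g) q p) :
    L.IsBisimulation (Relation.EqvGen g) := by
  let r := Relation.EqvGen g
  have hmutual : Equivalence fun p q => Matches L r p q ∧ Matches L r q p :=
    ⟨fun p => ⟨Matches.refl L r p, Matches.refl L r p⟩, fun h => ⟨h.2, h.1⟩,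
      fun h h' => ⟨h.1.trans h'.1, h'.2.trans h.2⟩⟩
  exact ⟨Relation.EqvGen.is_equivalence g, fun p q hpq =>
    (hmutual.eqvGen_iff.mp (Relation.EqvGen.mono h p q hpq)).1⟩

/-- Bisimulation up to bisimilarity. -/
lemma bisim_of_matches
    (h : ∀ p q, g p q → Matches L (Relation.EqvGen (fun x y => L.Bisim x y ∨ g x y)) p q ∧
      Matches L (Relation.EqvGen (fun x y => L.Bisim x y ∨ g x y)) q p)
    (hpq : g p q) : L.Bisim p q := by
  let r := Relation.EqvGen (fun x y => L.Bisim x y ∨ g x y)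
  have hr : Equivalence r := Relation.EqvGen.is_equivalence _
  refine IsBisimulation.bisim (isBisimulation_eqvGen ?_)
    (Relation.EqvGen.rel p q (Or.inr hpq) : r p q)
  rintro p q (⟨r₀, h₀, hpq₀⟩ | hpq)
  · have hle : r₀ ≤ r := fun x y hxy => Relation.EqvGen.rel _ _ (Or.inl ⟨r₀, h₀, hxy⟩)
    exact ⟨Matches.mono h₀.1 hr hle (h₀.2 p q hpq₀),
      Matches.mono h₀.1 hr hle (h₀.2 q p (h₀.1.symm hpq₀))⟩
  · exact h p q hpq

end Bisimulation

lemma or_gadget_bisim_of_bisim_left {L : PLTS S A} {a : A}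
    {s s' t₁ t₁' t₂ t₂' u₁₂ u₁'₂ u₁₂' u₁'₂' : S} {ds ds' d₁₂ d₁'₂' d₁₂' d₁'₂ : PMF S}
    (hds : TwoHalf ds u₁₂ u₁'₂') (hds' : TwoHalf ds' u₁₂' u₁'₂)
    (hd₁₂ : TwoHalf d₁₂ t₁ t₂) (hd₁'₂' : TwoHalf d₁'₂' t₁' t₂')
    (hd₁₂' : TwoHalf d₁₂' t₁ t₂') (hd₁'₂ : TwoHalf d₁'₂ t₁' t₂)
    (hs : L.OnlyTr s a ds) (hs' : L.OnlyTr s' a ds')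
    (hu₁₂ : L.OnlyTr u₁₂ a d₁₂) (hu₁'₂' : L.OnlyTr u₁'₂' a d₁'₂')
    (hu₁₂' : L.OnlyTr u₁₂' a d₁₂') (hu₁'₂ : L.OnlyTr u₁'₂ a d₁'₂)
    (ht : L.Bisim t₁ t₁') : L.Bisim s s' := by
  let g : S → S → Prop := fun x y =>
    (x = s ∧ y = s') ∨ (x = u₁₂ ∧ y = u₁'₂) ∨ (x = u₁'₂' ∧ y = u₁₂')
  let r := Relation.EqvGen (fun x y => L.Bisim x y ∨ g x y)
  have hr : Equivalence r := Relation.EqvGen.is_equivalence _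
  have ht' : r t₁ t₁' := Relation.EqvGen.rel _ _ (Or.inl ht)
  have hu : r u₁₂ u₁'₂ := Relation.EqvGen.rel _ _ (Or.inr (Or.inr (Or.inl ⟨rfl, rfl⟩)))
  have hu' : r u₁'₂' u₁₂' := Relation.EqvGen.rel _ _ (Or.inr (Or.inr (Or.inr ⟨rfl, rfl⟩)))
  have hmatch : ∀ {p q d e}, L.OnlyTr p a d → L.OnlyTr q a e → REquiv r d e →
      Matches L r p q ∧ Matches L r q p :=
    fun hp hq h => ⟨hp.matches hq h, hq.matches hp h.symm⟩
  refine bisim_of_matches (g := g) ?_ (Or.inl ⟨rfl, rfl⟩)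
  rintro p q (⟨rfl, rfl⟩ | ⟨rfl, rfl⟩ | ⟨rfl, rfl⟩)
  · exact hmatch hs hs' (hds.requiv hr hds'.symm hu hu')
  · exact hmatch hu₁₂ hu₁'₂ (hd₁₂.requiv hr hd₁'₂ ht' (hr.refl t₂))
  · exact hmatch hu₁'₂' hu₁₂' (hd₁'₂'.requiv hr hd₁₂' (hr.symm ht') (hr.refl t₂'))

end PLTS

theorem or_gadget_general (S A : Type) (L : PLTS S A) (a : A)
    (s s' t₁ t₁' t₂ t₂' u₁₂ u₁'₂ u₁₂' u₁'₂' : S)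
    (ds ds' d₁₂ d₁'₂' d₁₂' d₁'₂ : PMF S)
    (hds : PLTS.TwoHalf ds u₁₂ u₁'₂') (hds' : PLTS.TwoHalf ds' u₁₂' u₁'₂)
    (hd₁₂ : PLTS.TwoHalf d₁₂ t₁ t₂) (hd₁'₂' : PLTS.TwoHalf d₁'₂' t₁' t₂')
    (hd₁₂' : PLTS.TwoHalf d₁₂' t₁ t₂') (hd₁'₂ : PLTS.TwoHalf d₁'₂ t₁' t₂)
    (hs : L.OnlyTr s a ds) (hs' : L.OnlyTr s' a ds')
    (hu₁₂ : L.OnlyTr u₁₂ a d₁₂) (hu₁'₂' : L.OnlyTr u₁'₂' a d₁'₂')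
    (hu₁₂' : L.OnlyTr u₁₂' a d₁₂') (hu₁'₂ : L.OnlyTr u₁'₂ a d₁'₂) :
    L.Bisim s s' ↔ (L.Bisim t₁ t₁' ∨ L.Bisim t₂ t₂') := by
  constructor
  · rintro ⟨r, hr, hss'⟩
    rcases PLTS.rel_or_rel_of_requiv hr.1 (hs.requiv_of_rel hr hs' hss') hds.left_mem_support
      hds'.support_subset with hu | hu
    · exact Or.inr (hr.bisim (hd₁₂.rel_of_requiv hr.1 hd₁₂' (hu₁₂.requiv_of_rel hr hu₁₂' hu)))
    · exact Or.inl (hr.bisim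
        (hd₁₂.symm.rel_of_requiv hr.1 hd₁'₂.symm (hu₁₂.requiv_of_rel hr hu₁'₂ hu)))
  · rintro (ht | ht)
    · exact PLTS.or_gadget_bisim_of_bisim_left hds hds' hd₁₂ hd₁'₂' hd₁₂' hd₁'₂
        hs hs' hu₁₂ hu₁'₂' hu₁₂' hu₁'₂ ht
    · exact PLTS.or_gadget_bisim_of_bisim_left hds hds'.symm hd₁₂.symm hd₁'₂'.symm
        hd₁'₂.symm hd₁₂'.symm hs hs' hu₁₂ hu₁'₂' hu₁'₂ hu₁₂' ht

/-- **OR-gadget.** If the only transitions from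
`s, s', u₁₂, u₁'₂', u₁₂', u₁'₂` are
`s –a→ u₁₂ | u₁'₂'`, `s' –a→ u₁₂' | u₁'₂`, `u₁₂ –a→ t₁ | t₂`,
`u₁'₂' –a→ t₁' | t₂'`, `u₁₂' –a→ t₁ | t₂'`, `u₁'₂ –a→ t₁' | t₂`, then
`s ∼ s'` iff (`t₁ ∼ t₁'` or `t₂ ∼ t₂'`). -/
theorem or_gadget (S A : Type) [Countable S] (L : PLTS S A) (a : A)
    (s s' t₁ t₁' t₂ t₂' u₁₂ u₁'₂ u₁₂' u₁'₂' : S)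
    (ds ds' d₁₂ d₁'₂' d₁₂' d₁'₂ : PMF S)
    (hds : PLTS.TwoHalf ds u₁₂ u₁'₂') (hds' : PLTS.TwoHalf ds' u₁₂' u₁'₂)
    (hd₁₂ : PLTS.TwoHalf d₁₂ t₁ t₂) (hd₁'₂' : PLTS.TwoHalf d₁'₂' t₁' t₂')
    (hd₁₂' : PLTS.TwoHalf d₁₂' t₁ t₂') (hd₁'₂ : PLTS.TwoHalf d₁'₂ t₁' t₂)
    (hs : L.OnlyTr s a ds) (hs' : L.OnlyTr s' a ds')
    (hu₁₂ : L.OnlyTr u₁₂ a d₁₂) (hu₁'₂' : L.OnlyTr u₁'₂' a d₁'₂')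
    (hu₁₂' : L.OnlyTr u₁₂' a d₁₂') (hu₁'₂ : L.OnlyTr u₁'₂ a d₁'₂) :
    L.Bisim s s' ↔ (L.Bisim t₁ t₁' ∨ L.Bisim t₂ t₂') :=
  or_gadget_general S A L a s s' t₁ t₁' t₂ t₂' u₁₂ u₁'₂ u₁₂' u₁'₂' ds ds' d₁₂ d₁'₂' d₁₂' d₁'₂ hds
    hds' hd₁₂ hd₁'₂' hd₁₂' hd₁'₂ hs hs' hu₁₂ hu₁'₂' hu₁₂' hu₁'₂
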